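/- In the structural model, the bias of the selection-on-observables estimand satisfies τ_soo − τ = β_u γ_u Var(U^{⊥W_Z,W_Y}) / Var(Z^{⊥W_Z,W_Y}), where A^{⊥B} denotes the residual of A after population linear projection onto B (and any covariates partialled out). -/

import Mathlib

/-! Pairing the normal equations with `Z^⊥ := Z^{⊥W_Z,W_Y}` kills the covariates and leaves
`τ_soo ‖Z^⊥‖² = ⟪Y, Z^⊥⟫`. In the structural equation for `Y`, `ε_y` drops out (it is orthogonal
to `U` and the other noises, hence to `Z, W_Z, W_Y`), `τ Z` contributes `τ ‖Z^⊥‖²`, and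
`⟪U, Z^⊥⟫ = ⟪Z, U^⊥⟫ = γ_u ‖U^⊥‖²` because residualisation is self-adjoint and `ε_z` is orthogonal
to `U, W_Z, W_Y`. -/

open Submodule RealInnerProductSpace

/-- Residual of `A` after orthogonal projection onto the span of the finite set `S`
(population linear projection residual `A^{⊥S}`). -/
noncomputable def resid {H : Type*} [NormedAddCommGroup H] [InnerProductSpace ℝ H]
    [CompleteSpace H] (A : H) (S : Set H) (hS : S.Finite) : H :=
  haveI := hS.to_subtype
  haveI : FiniteDimensional ℝ (span ℝ S) := FiniteDimensional.span_of_finite ℝ hS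
  A - (orthogonalProjection (span ℝ S) A : H)

section Resid

variable {H : Type*} [NormedAddCommGroup H] [InnerProductSpace ℝ H] [CompleteSpace H]
  {S : Set H} (hS : S.Finite)

theorem resid_mem_orthogonal (A : H) : resid A S hS ∈ (span ℝ S)ᗮ := by
  have := hS.to_subtype
  have : FiniteDimensional ℝ (span ℝ S) := FiniteDimensional.span_of_finite ℝ hS
  exact sub_starProjection_mem_orthogonal A

theorem sub_resid_mem_span (A : H) : A - resid A S hS ∈ span ℝ S := by
  have := hS.to_subtype
  have : FiniteDimensional ℝ (span ℝ S) := FiniteDimensional.span_of_finite ℝ hS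
  simp [resid]

theorem inner_resid_eq_zero_of_mem_span {v : H} (hv : v ∈ span ℝ S) (A : H) :
    ⟪v, resid A S hS⟫ = 0 :=
  inner_right_of_mem_orthogonal hv (resid_mem_orthogonal hS A)

theorem inner_resid_eq_inner_of_forall_inner_eq_zero {v : H} (hv : ∀ s ∈ S, ⟪v, s⟫ = 0) (A : H) :
    ⟪v, resid A S hS⟫ = ⟪v, A⟫ := by
  have hspan : span ℝ S ≤ (ℝ ∙ v)ᗮ :=
    span_le.mpr fun s hs => mem_orthogonal_singleton_iff_inner_right.mpr (hv s hs)
  have h := mem_orthogonal_singleton_iff_inner_right.mp (hspan (sub_resid_mem_span hS A))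
  rw [inner_sub_right] at h
  linarith

theorem inner_resid_eq_inner_resid_resid (A B : H) :
    ⟪B, resid A S hS⟫ = ⟪resid B S hS, resid A S hS⟫ := by
  have h := inner_resid_eq_zero_of_mem_span hS (sub_resid_mem_span hS B) A
  rw [inner_sub_left] at h
  linarith

theorem inner_resid_comm (A B : H) : ⟪B, resid A S hS⟫ = ⟪A, resid B S hS⟫ := by
  rw [inner_resid_eq_inner_resid_resid, inner_resid_eq_inner_resid_resid hS B, real_inner_comm]

end Resid

theorem forall_inner_covariate_eq_zero {H : Type*} [NormedAddCommGroup H] [InnerProductSpace ℝ H]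
    {v U WZ WY εwy εwz : H} {αu αwz φu : ℝ}
    (hWY : WY = αu • U + αwz • WZ + εwy) (hWZ : WZ = φu • U + εwz)
    (hU : ⟪v, U⟫ = 0) (hεwy : ⟪v, εwy⟫ = 0) (hεwz : ⟪v, εwz⟫ = 0) :
    ∀ s ∈ ({WZ, WY} : Set H), ⟪v, s⟫ = 0 := by
  have hvWZ : ⟪v, WZ⟫ = 0 := by
    rw [hWZ, inner_add_right, inner_smul_right, hU, hεwz]; ring
  have hvWY : ⟪v, WY⟫ = 0 := by
    rw [hWY, inner_add_right, inner_add_right, inner_smul_right, inner_smul_right, hU, hvWZ,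
      hεwy]; ring
  simpa using ⟨hvWZ, hvWY⟩

/-- Random variables are vectors of a real Hilbert space with the covariance as inner product;
`τ_soo` is the coefficient `t` of any solution of the normal equations. -/
theorem stmt_6_general {H : Type*} [NormedAddCommGroup H] [InnerProductSpace ℝ H] [CompleteSpace H]
    (Y Z WZ WY U εy εz εwy εwz : H)
    (τ βu βwy βwz γu γwy γwz αu αwz φu : ℝ)
    (hY : Y = βu • U + βwy • WY + βwz • WZ + τ • Z + εy)
    (hZ : Z = γu • U + γwy • WY + γwz • WZ + εz)
    (hWY : WY = αu • U + αwz • WZ + εwy)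
    (hWZ : WZ = φu • U + εwz)
    (horth : ∀ i j : Fin 5, i ≠ j →
      ⟪(![εy, εz, εwy, εwz, U]) i, (![εy, εz, εwy, εwz, U]) j⟫ = 0)
    (hvarZ : 0 < ⟪resid Z {WZ, WY} (Set.toFinite _), resid Z {WZ, WY} (Set.toFinite _)⟫) :
    ∀ t a b : ℝ,
      ⟪Y - (t • Z + a • WZ + b • WY), Z⟫ = 0 →
      ⟪Y - (t • Z + a • WZ + b • WY), WZ⟫ = 0 →
      ⟪Y - (t • Z + a • WZ + b • WY), WY⟫ = 0 →
      t - τ = βu * γu *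
        ⟪resid U {WZ, WY} (Set.toFinite _), resid U {WZ, WY} (Set.toFinite _)⟫ /
        ⟪resid Z {WZ, WY} (Set.toFinite _), resid Z {WZ, WY} (Set.toFinite _)⟫ := by
  intro t a b hRZ hRWZ hRWY
  have hεyU : ⟪εy, U⟫ = 0 := horth 0 4 (by decide)
  have hεyεz : ⟪εy, εz⟫ = 0 := horth 0 1 (by decide)
  have hεzU : ⟪εz, U⟫ = 0 := horth 1 4 (by decide)
  have hS : ({WZ, WY} : Set H).Finite := Set.toFinite _
  have hWZ_mem : WZ ∈ span ℝ {WZ, WY} := subset_span (by simp)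
  have hWY_mem : WY ∈ span ℝ {WZ, WY} := subset_span (by simp)
  have hεyW := forall_inner_covariate_eq_zero hWY hWZ hεyU (horth 0 2 (by decide))
    (horth 0 3 (by decide))
  have hεzW := forall_inner_covariate_eq_zero hWY hWZ hεzU (horth 1 2 (by decide))
    (horth 1 3 (by decide))
  have hεyZ : ⟪εy, Z⟫ = 0 := by
    rw [hZ]
    simp only [inner_add_right, inner_smul_right, hεyU, hεyεz, hεyW WZ (by simp),
      hεyW WY (by simp)]
    ring
  have hUrZ : ⟪U, resid Z {WZ, WY} hS⟫ = γu * ⟪resid U {WZ, WY} hS, resid U {WZ, WY} hS⟫ := by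
    rw [inner_resid_comm, ← inner_resid_eq_inner_resid_resid, hZ]
    simp only [inner_add_left, real_inner_smul_left, inner_resid_eq_zero_of_mem_span hS hWZ_mem,
      inner_resid_eq_zero_of_mem_span hS hWY_mem,
      inner_resid_eq_inner_of_forall_inner_eq_zero hS hεzW, hεzU]
    ring
  have hnormal : ⟪Y - (t • Z + a • WZ + b • WY), resid Z {WZ, WY} hS⟫ = 0 := by
    rw [inner_resid_eq_inner_of_forall_inner_eq_zero hS (by simpa using ⟨hRWZ, hRWY⟩), hRZ]
  rw [hY] at hnormal
  simp only [inner_sub_left, inner_add_left, real_inner_smul_left, hUrZ,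
    inner_resid_eq_zero_of_mem_span hS hWZ_mem, inner_resid_eq_zero_of_mem_span hS hWY_mem,
    inner_resid_eq_inner_of_forall_inner_eq_zero hS hεyW, hεyZ,
    inner_resid_eq_inner_resid_resid hS Z Z] at hnormal
  rw [eq_div_iff hvarZ.ne']
  linarith

/-- Bias of the selection-on-observables estimand:
`τ_soo − τ = β_u γ_u Var(U^{⊥W_Z,W_Y}) / Var(Z^{⊥W_Z,W_Y})`, where `τ_soo` is the
coefficient on `Z` in the population regression of `Y` on `(Z, W_Z, W_Y)` (characterized
by the normal equations). Random variables are modeled as vectors in a real Hilbert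
space with inner product = covariance. -/
theorem stmt_6 {H : Type*} [NormedAddCommGroup H] [InnerProductSpace ℝ H] [CompleteSpace H]
    (Y Z WZ WY U εy εz εwy εwz : H)
    (τ βu βwy βwz γu γwy γwz αu αwz φu : ℝ)
    (hY : Y = βu • U + βwy • WY + βwz • WZ + τ • Z + εy)
    (hZ : Z = γu • U + γwy • WY + γwz • WZ + εz)
    (hWY : WY = αu • U + αwz • WZ + εwy)
    (hWZ : WZ = φu • U + εwz)
    (horth : ∀ i j : Fin 5, i ≠ j →
      ⟪(![εy, εz, εwy, εwz, U]) i, (![εy, εz, εwy, εwz, U]) j⟫ = 0)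
    (hpos : ∀ i : Fin 5, 0 < ⟪(![εy, εz, εwy, εwz, U]) i, (![εy, εz, εwy, εwz, U]) i⟫)
    (hli : LinearIndependent ℝ ![Z, WZ, WY])
    (hvarZ : 0 < ⟪resid Z {WZ, WY} (Set.toFinite _), resid Z {WZ, WY} (Set.toFinite _)⟫) :
    ∀ t a b : ℝ,
      ⟪Y - (t • Z + a • WZ + b • WY), Z⟫ = 0 →
      ⟪Y - (t • Z + a • WZ + b • WY), WZ⟫ = 0 →
      ⟪Y - (t • Z + a • WZ + b • WY), WY⟫ = 0 →
      t - τ = βu * γu *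
        ⟪resid U {WZ, WY} (Set.toFinite _), resid U {WZ, WY} (Set.toFinite _)⟫ /
        ⟪resid Z {WZ, WY} (Set.toFinite _), resid Z {WZ, WY} (Set.toFinite _)⟫ :=
  stmt_6_general Y Z WZ WY U εy εz εwy εwz τ βu βwy βwz γu γwy γwz αu αwz φu hY hZ hWY hWZ horth
    hvarZ
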